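/- Let p be an odd prime and let i ≥ 0 and r ≥ i(p+1) be integers. The map Q ↦ θ^i·Q is an injective F-linear map from V_{r−i(p+1)} into V_r whose image is exactly V_r^{(i)}. Moreover, for all a, b, c, d ∈ 𝔽_p and all Q ∈ V_{r−i(p+1)}, the substitution of θ^i·Q by (a,b,c,d) equals (ad−bc)^i·θ^i·(substitution of Q by (a,b,c,d)); i.e., multiplication by θ^i realizes V_r^{(i)} as V_{r−i(p+1)} twisted by the i-th power of the determinant character. -/

import Mathlib

/-
Multiplication by the homogeneous polynomial `θ ≠ 0` of degree `p + 1` is injective on the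
domain `F[X,Y]`, and a quotient of homogeneous polynomials by a nonzero homogeneous one is again
homogeneous (compare homogeneous components of `θ^i * Q`). For the twist, note that
`(aX + cY)^p = aX^p + cY^p` in characteristic `p` because `a^p = a` on `𝔽_p`; expanding then gives
`θ(aX + cY, bX + dY) = (ad - bc) θ`.
-/

open MvPolynomial

/-- The substitution action: `P(X,Y) ↦ P(aX+cY, bX+dY)` on `F[X,Y] = MvPolynomial (Fin 2) F`,
for `a b c d ∈ 𝔽_p` viewed in `F` via the canonical map. -/
noncomputable def substACT (p : ℕ) [Fact p.Prime] (F : Type*) [Field F]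
    [Algebra (ZMod p) F] (a b c d : ZMod p) :
    MvPolynomial (Fin 2) F →ₐ[F] MvPolynomial (Fin 2) F :=
  aeval (fun i : Fin 2 =>
    if i = 0 then C (algebraMap (ZMod p) F a) * X 0 + C (algebraMap (ZMod p) F c) * X 1
    else C (algebraMap (ZMod p) F b) * X 0 + C (algebraMap (ZMod p) F d) * X 1)

namespace MvPolynomial

variable {σ R : Type*}

theorem homogeneousComponent_add_mul_of_isHomogeneous [CommSemiring R]
    {A : MvPolynomial σ R} {m : ℕ} (hA : A.IsHomogeneous m) (B : MvPolynomial σ R) (k : ℕ) :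
    homogeneousComponent (m + k) (A * B) = A * homogeneousComponent k B := by
  have hAB (j : ℕ) : A * homogeneousComponent j B ∈ homogeneousSubmodule σ R (m + j) :=
    hA.mul (homogeneousComponent_isHomogeneous j B)
  conv_lhs => rw [← sum_homogeneousComponent B, Finset.mul_sum, map_sum]
  rw [Finset.sum_eq_single k]
  · rw [homogeneousComponent_of_mem (hAB k), if_pos rfl]
  · intro j _ hj
    rw [homogeneousComponent_of_mem (hAB j), if_neg (by omega)]
  · intro hk
    rw [homogeneousComponent_eq_zero _ B (by simpa using hk), mul_zero, map_zero]

theorem IsHomogeneous.of_mul_left [CommRing R] [IsDomain R] {A B : MvPolynomial σ R} {m n : ℕ}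
    (hA : A.IsHomogeneous m) (hA0 : A ≠ 0) (hAB : (A * B).IsHomogeneous (m + n)) :
    B.IsHomogeneous n := by
  have hcomp (k : ℕ) (hk : k ≠ n) : homogeneousComponent k B = 0 := by
    have hAk : A * homogeneousComponent k B = 0 := by
      rw [← homogeneousComponent_add_mul_of_isHomogeneous hA,
        homogeneousComponent_of_mem hAB, if_neg (by omega)]
    exact (mul_eq_zero.1 hAk).resolve_left hA0
  have hB : homogeneousComponent n B = B := by
    conv_rhs => rw [← sum_homogeneousComponent B]
    rw [Finset.sum_eq_single n (fun k _ hk => hcomp k hk)]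
    exact fun hn => homogeneousComponent_eq_zero _ B (by simpa using hn)
  exact hB ▸ homogeneousComponent_isHomogeneous n B

end MvPolynomial

section Theta

variable (p : ℕ) (F : Type*) [Field F]

noncomputable def theta : MvPolynomial (Fin 2) F := X 0 ^ p * X 1 - X 0 * X 1 ^ p

theorem isHomogeneous_theta : (theta p F).IsHomogeneous (p + 1) := by
  have hX0pX1 : (X 0 ^ p * X 1 : MvPolynomial (Fin 2) F).IsHomogeneous (p + 1) :=
    (isHomogeneous_X_pow 0 p).mul (isHomogeneous_X F 1)
  have hX0X1p : (X 0 * X 1 ^ p : MvPolynomial (Fin 2) F).IsHomogeneous (p + 1) := by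
    simpa [add_comm] using (isHomogeneous_X F 0).mul (isHomogeneous_X_pow 1 p)
  exact hX0pX1.sub hX0X1p

theorem theta_ne_zero (hp : p ≠ 1) : theta p F ≠ 0 := by
  have htheta : theta p F = monomial (Finsupp.single 0 p + Finsupp.single 1 1) 1 -
      monomial (Finsupp.single 0 1 + Finsupp.single 1 p) 1 := by
    rw [theta, X_pow_eq_monomial, X_pow_eq_monomial, X, X, monomial_mul, monomial_mul, one_mul]
  intro h
  rw [htheta, sub_eq_zero] at h
  have hexp := congrArg (· 0) (monomial_left_injective one_ne_zero h)
  exact hp (by simpa using hexp)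

theorem substACT_theta [Fact p.Prime] [Algebra (ZMod p) F] (a b c d : ZMod p) :
    substACT p F a b c d (theta p F) =
      C (algebraMap (ZMod p) F (a * d - b * c)) * theta p F := by
  have : CharP F p := charP_of_injective_algebraMap (algebraMap (ZMod p) F).injective p
  have frobenius_linear (u v : ZMod p) :
      (C (algebraMap (ZMod p) F u) * X 0 + C (algebraMap (ZMod p) F v) * X 1 :
        MvPolynomial (Fin 2) F) ^ p =
      C (algebraMap (ZMod p) F u) * X 0 ^ p + C (algebraMap (ZMod p) F v) * X 1 ^ p := by
    rw [add_pow_char, mul_pow, mul_pow, ← map_pow, ← map_pow, ← map_pow, ← map_pow,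
      ZMod.pow_card, ZMod.pow_card]
  simp only [theta, substACT, map_sub, map_mul, map_pow, aeval_X, Fin.isValue, ↓reduceIte,
    one_ne_zero, frobenius_linear]
  ring

end Theta

theorem zigzag_stmt2_general (p : ℕ) [Fact p.Prime]
    (F : Type*) [Field F] [Algebra (ZMod p) F]
    (i r : ℕ) (hr : i * (p + 1) ≤ r)
    (θ : MvPolynomial (Fin 2) F) (hθ : θ = X 0 ^ p * X 1 - X 0 * X 1 ^ p) :
    -- maps `V_{r-i(p+1)}` into `V_r^{(i)}`
    (∀ Q : MvPolynomial (Fin 2) F, Q.IsHomogeneous (r - i * (p + 1)) →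
      (θ ^ i * Q).IsHomogeneous r ∧ θ ^ i ∣ θ ^ i * Q) ∧
    -- injective
    (∀ Q Q' : MvPolynomial (Fin 2) F, Q.IsHomogeneous (r - i * (p + 1)) →
      Q'.IsHomogeneous (r - i * (p + 1)) → θ ^ i * Q = θ ^ i * Q' → Q = Q') ∧
    -- image is exactly `V_r^{(i)}`
    (∀ P : MvPolynomial (Fin 2) F, P.IsHomogeneous r → θ ^ i ∣ P →
      ∃ Q : MvPolynomial (Fin 2) F, Q.IsHomogeneous (r - i * (p + 1)) ∧ P = θ ^ i * Q) ∧
    -- equivariance: `V_r^{(i)} ≅ V_{r-i(p+1)} ⊗ D^i`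
    (∀ a b c d : ZMod p, ∀ Q : MvPolynomial (Fin 2) F,
      Q.IsHomogeneous (r - i * (p + 1)) →
      substACT p F a b c d (θ ^ i * Q) =
        C (algebraMap (ZMod p) F ((a * d - b * c) ^ i)) *
          (θ ^ i * substACT p F a b c d Q)) := by
  obtain rfl : θ = theta p F := hθ
  have hθi0 : theta p F ^ i ≠ 0 :=
    pow_ne_zero i (theta_ne_zero p F (Fact.out : p.Prime).ne_one)
  have hθi : (theta p F ^ i).IsHomogeneous (i * (p + 1)) := by
    simpa [mul_comm] using (isHomogeneous_theta p F).pow i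
  have hdeg : i * (p + 1) + (r - i * (p + 1)) = r := Nat.add_sub_cancel' hr
  refine ⟨fun Q hQ => ⟨hdeg ▸ hθi.mul hQ, dvd_mul_right _ Q⟩,
    fun Q Q' _ _ h => mul_left_cancel₀ hθi0 h, ?_, ?_⟩
  · rintro P hP ⟨Q, rfl⟩
    exact ⟨Q, hθi.of_mul_left hθi0 (hdeg.symm ▸ hP), rfl⟩
  · intro a b c d Q _
    rw [map_mul, map_pow, substACT_theta, mul_pow, map_pow, map_pow]
    ring

/-- Let `p` be an odd prime, `i ≥ 0` and `r ≥ i(p+1)`.  The map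
`Q ↦ θ^i·Q` (with `θ = X^p Y − X Y^p`) is an injective `F`-linear map (it is the
restriction of the `F`-linear multiplication-by-`θ^i` map) from `V_{r−i(p+1)}`
into `V_r`, with image exactly `V_r^{(i)}`; moreover it intertwines the
substitution action up to the twist by the `i`-th power of the determinant:
`(θ^i·Q)(aX+cY, bX+dY) = (ad−bc)^i · θ^i · Q(aX+cY, bX+dY)`. -/
theorem zigzag_stmt2 (p : ℕ) [Fact p.Prime] (hp : Odd p)
    (F : Type*) [Field F] [Algebra (ZMod p) F] [IsAlgClosure (ZMod p) F]
    (i r : ℕ) (hr : i * (p + 1) ≤ r)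
    (θ : MvPolynomial (Fin 2) F) (hθ : θ = X 0 ^ p * X 1 - X 0 * X 1 ^ p) :
    -- maps `V_{r-i(p+1)}` into `V_r^{(i)}`
    (∀ Q : MvPolynomial (Fin 2) F, Q.IsHomogeneous (r - i * (p + 1)) →
      (θ ^ i * Q).IsHomogeneous r ∧ θ ^ i ∣ θ ^ i * Q) ∧
    -- injective
    (∀ Q Q' : MvPolynomial (Fin 2) F, Q.IsHomogeneous (r - i * (p + 1)) →
      Q'.IsHomogeneous (r - i * (p + 1)) → θ ^ i * Q = θ ^ i * Q' → Q = Q') ∧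
    -- image is exactly `V_r^{(i)}`
    (∀ P : MvPolynomial (Fin 2) F, P.IsHomogeneous r → θ ^ i ∣ P →
      ∃ Q : MvPolynomial (Fin 2) F, Q.IsHomogeneous (r - i * (p + 1)) ∧ P = θ ^ i * Q) ∧
    -- equivariance: `V_r^{(i)} ≅ V_{r-i(p+1)} ⊗ D^i`
    (∀ a b c d : ZMod p, ∀ Q : MvPolynomial (Fin 2) F,
      Q.IsHomogeneous (r - i * (p + 1)) →
      substACT p F a b c d (θ ^ i * Q) =
        C (algebraMap (ZMod p) F ((a * d - b * c) ^ i)) *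
          (θ ^ i * substACT p F a b c d Q)) :=
  zigzag_stmt2_general p F i r hr θ hθ
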